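/- If t < C(p+1,2), then every DHHF(t;k,(w_1,...,w_t),t,p) is a perfect heterogeneous hash family PHHF(t;k,(w_1,...,w_t),t): every t-set of columns is separated (all entries pairwise distinct) in some row. -/

import Mathlib

/-!
Suppose no row separates the columns `cols`. Choosing a colliding pair of columns in each of the
`t` rows gives a graph with at most `t` edges. A graph of chromatic number `n` has at least
`C(n,2)` edges, since under an optimal colouring any two colour classes are joined by an edge
(otherwise they could be merged). As `t < C(p+1,2)`, the graph is `p`-colourable, and the colour
classes form a partition into `p` classes. Some row separates it, yet that row's colliding pair
is an edge and so lies in two different classes.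
-/

/-- `A` is a distributing heterogeneous hash family `DHHF(n; k, w, t, p)`. -/
def IsDHHF {α : Type} [DecidableEq α] (n k t p : ℕ) (w : Fin n → ℕ)
    (A : Fin n → Fin k → α) : Prop :=
  (∀ i, (Finset.univ.image (A i)).card ≤ w i) ∧
  ∀ cols : Fin t → Fin k, Function.Injective cols →
    ∀ part : Fin t → Fin p, ∃ r : Fin n,
      ∀ i j, part i ≠ part j → A r (cols i) ≠ A r (cols j)

open Finset SimpleGraph

namespace SimpleGraph

variable {V : Type*}

theorem card_edgeFinset_fromEdgeSet_range_le [DecidableEq V] {ι : Type*} [Fintype ι]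
    (e : ι → Sym2 V) : #(fromEdgeSet (Set.range e)).edgeFinset ≤ Fintype.card ι := by
  calc #(fromEdgeSet (Set.range e)).edgeFinset ≤ #(univ.image e) := by
        refine card_le_card fun x hx => ?_
        simp only [mem_edgeFinset, edgeSet_fromEdgeSet, Set.mem_sdiff] at hx
        simpa using hx.1
    _ ≤ Fintype.card ι := card_image_le

theorem choose_two_le_card_edgeFinset [Fintype V] (G : SimpleGraph V) [Fintype G.edgeSet]
    {n : ℕ} (hn : G.chromaticNumber = n) : n.choose 2 ≤ #G.edgeFinset := by
  classical
  obtain ⟨C⟩ : G.Colorable n := chromaticNumber_le_iff_colorable.mp hn.le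
  set H := fromEdgeSet (Sym2.map C '' G.edgeSet)
  let φ : G →g H := ⟨C, fun h => (fromEdgeSet_adj _).mpr ⟨⟨s(_, _), h, rfl⟩, C.valid h⟩⟩
  -- `χ G ≤ χ H ≤ n = |Fin n|` forces the image graph `H` of the colouring to be complete.
  have hH : H = ⊤ := by
    refine eq_top_of_chromaticNumber_eq_card (le_antisymm ?_ ?_)
    · simpa using (chromaticNumber_le_card (G := H))
    · simpa [← hn] using chromaticNumber_mono_of_hom φ
  calc n.choose 2 = #(⊤ : SimpleGraph (Fin n)).edgeFinset := by
        rw [card_edgeFinset_top_eq_card_choose_two, Fintype.card_fin]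
    _ = #H.edgeFinset := by congr!; exact hH.symm
    _ ≤ #(G.edgeFinset.image (Sym2.map C)) := by
        refine card_le_card fun x hx => ?_
        simp only [H, mem_edgeFinset, edgeSet_fromEdgeSet, Set.mem_sdiff] at hx
        simpa using hx.1
    _ ≤ #G.edgeFinset := card_image_le

theorem colorable_of_card_edgeFinset_lt [Fintype V] (G : SimpleGraph V) [Fintype G.edgeSet]
    {p : ℕ} (h : #G.edgeFinset < (p + 1).choose 2) : G.Colorable p := by
  obtain ⟨n, hn⟩ := ENat.ne_top_iff_exists.mp
    (chromaticNumber_ne_top_iff_exists.mpr ⟨_, G.colorable_of_fintype⟩)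
  have hnp : n ≤ p := by
    by_contra! hpn
    exact (h.trans_le (Nat.choose_le_choose 2 hpn)).not_ge
      (G.choose_two_le_card_edgeFinset hn.symm)
  exact chromaticNumber_le_iff_colorable.mp (hn ▸ Nat.cast_le.mpr hnp)

end SimpleGraph

/-- if `t < C(p+1,2)`, every `DHHF(t;k,w,t,p)` is a perfect heterogeneous
hash family: every `t`-set of columns is separated (all entries distinct) in some row. -/
theorem stmt_6 {α : Type} [DecidableEq α] (t k p : ℕ) (w : Fin t → ℕ)
    (ht : t < (p + 1).choose 2)
    (A : Fin t → Fin k → α) (hA : IsDHHF t k t p w A) :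
    ∀ cols : Fin t → Fin k, Function.Injective cols →
      ∃ r : Fin t, Function.Injective fun i => A r (cols i) := by
  intro cols hcols
  by_contra! hcollide
  simp only [Function.Injective, not_forall] at hcollide
  choose i j hsame hne using hcollide
  set G := fromEdgeSet (Set.range fun r => s(i r, j r))
  obtain ⟨C⟩ : G.Colorable p := G.colorable_of_card_edgeFinset_lt <|
    (card_edgeFinset_fromEdgeSet_range_le _).trans_lt (by simpa using ht)
  obtain ⟨r, hr⟩ := hA.2 cols hcols C
  exact hr (i r) (j r) (C.valid ((fromEdgeSet_adj _).mpr ⟨⟨r, rfl⟩, hne r⟩)) (hsame r)
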